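/- In Stalnaker's logic of knowledge and belief (the bimodal Hilbert system over operators K_i and B_i obtained from multi-agent S4 for the K_i operators together with the axiom schemas B_i φ → K_i B_i φ, ¬B_i φ → K_i ¬B_i φ, K_i φ → B_i φ, B_i φ → ¬B_i ¬φ, and B_i φ → B_i K_i φ), for every agent label i and every formula φ, the equivalence B_i φ ↔ ¬K_i ¬K_i φ is a theorem. -/
import Mathlib


/-- Formulas of the bimodal language of knowledge and belief:
⊥, variables, ∨, ∧, →, K_i, B_i. -/
inductive BForm (α P : Type) : Type
  | fls : BForm α P
  | var : P → BForm α P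
  | dis : BForm α P → BForm α P → BForm α P
  | con : BForm α P → BForm α P → BForm α P
  | imp : BForm α P → BForm α P → BForm α P
  | know : α → BForm α P → BForm α P
  | bel : α → BForm α P → BForm α P

namespace BForm

/-- Negation ¬φ := φ → ⊥. -/
def neg {α P : Type} (p : BForm α P) : BForm α P := p.imp .fls

/-- Biconditional φ ↔ ψ := (φ → ψ) ∧ (ψ → φ). -/
def iff' {α P : Type} (p q : BForm α P) : BForm α P := (p.imp q).con (q.imp p)

end BForm

/-- Boolean evaluation of a bimodal formula, treating modal subformulas as atoms. -/
def beval {α P : Type} (g : P → Bool) (h : BForm α P → Bool) : BForm α P → Bool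
  | .fls => false
  | .var x => g x
  | .dis p q => beval g h p || beval g h q
  | .con p q => beval g h p && beval g h q
  | .imp p q => !(beval g h p) || beval g h q
  | .know i p => h (.know i p)
  | .bel i p => h (.bel i p)

/-- Propositional tautologies of the bimodal language. -/
def BTautology {α P : Type} (p : BForm α P) : Prop := ∀ g h, beval g h p = true

/-- Stalnaker's logic of knowledge and belief: multi-agent S4 for the K_i
operators (tautologies, axioms K, T, 4, Modus Ponens, Necessitation for K_i)
together with the five Stalnaker axiom schemas for belief. -/
inductive SPrf {α P : Type} : BForm α P → Prop
  | taut {p} : BTautology p → SPrf p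
  | axK {i p q} : SPrf (((BForm.know i (p.imp q)).con (BForm.know i p)).imp (BForm.know i q))
  | axT {i p} : SPrf ((BForm.know i p).imp p)
  | ax4 {i p} : SPrf ((BForm.know i p).imp (BForm.know i (BForm.know i p)))
  | axPI {i p} : SPrf ((BForm.bel i p).imp (BForm.know i (BForm.bel i p)))
  | axNI {i p} : SPrf ((BForm.bel i p).neg.imp (BForm.know i (BForm.bel i p).neg))
  | axKB {i p} : SPrf ((BForm.know i p).imp (BForm.bel i p))
  | axCB {i p} : SPrf ((BForm.bel i p).imp (BForm.bel i p.neg).neg)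
  | axSB {i p} : SPrf ((BForm.bel i p).imp (BForm.bel i (BForm.know i p)))
  | mp {p q} : SPrf (p.imp q) → SPrf p → SPrf q
  | nec {i p} : SPrf p → SPrf (BForm.know i p)

namespace SPrf

variable {α P : Type} {p q r : BForm α P}

lemma imp_trans (h1 : SPrf (p.imp q)) (h2 : SPrf (q.imp r)) : SPrf (p.imp r) := by
  have t : SPrf ((p.imp q).imp ((q.imp r).imp (p.imp r))) := by
    apply taut; intro g h
    simp only [beval]
    cases beval g h p <;> cases beval g h q <;> cases beval g h r <;> rfl
  exact mp (mp t h1) h2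

lemma contrapose (h1 : SPrf (p.imp q)) : SPrf (q.neg.imp p.neg) := by
  have t : SPrf ((p.imp q).imp (q.neg.imp p.neg)) := by
    apply taut; intro g h
    simp only [beval, BForm.neg]
    cases beval g h p <;> cases beval g h q <;> rfl
  exact mp t h1

lemma mono {i : α} (h1 : SPrf (p.imp q)) :
    SPrf ((BForm.know i p).imp (BForm.know i q)) := by
  have hk : SPrf (BForm.know i (p.imp q)) := nec h1
  have t : SPrf ((BForm.know i (p.imp q)).imp
      (((((BForm.know i (p.imp q)).con (BForm.know i p)).imp (BForm.know i q))).imp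
        ((BForm.know i p).imp (BForm.know i q)))) := by
    apply taut; intro g h
    simp only [beval]
    cases h (BForm.know i (p.imp q)) <;> cases h (BForm.know i p) <;>
      cases h (BForm.know i q) <;> rfl
  exact mp (mp t hk) axK

lemma combine (h1 : SPrf (p.imp q)) (h2 : SPrf (q.imp p)) : SPrf (p.iff' q) := by
  have t : SPrf ((p.imp q).imp ((q.imp p).imp (p.iff' q))) := by
    apply taut; intro g h
    simp only [beval, BForm.iff']
    cases beval g h p <;> cases beval g h q <;> rfl
  exact mp (mp t h1) h2

end SPrf

/-- In Stalnaker's logic of knowledge and belief, for every agent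
label i and formula φ, the equivalence B_i φ ↔ ¬K_i ¬K_i φ is a theorem. -/
theorem belief_iff_not_know_not_know {α P : Type} (i : α) (φ : BForm α P) :
    SPrf (BForm.iff' (BForm.bel i φ) (BForm.know i (BForm.know i φ).neg).neg) := by
  apply SPrf.combine
  · -- B φ → ¬K¬Kφ
    have h1 : SPrf ((BForm.bel i φ).imp (BForm.bel i (BForm.know i φ))) := SPrf.axSB
    have h2 : SPrf ((BForm.bel i (BForm.know i φ)).imp
        (BForm.bel i (BForm.know i φ).neg).neg) := SPrf.axCB
    have h3 : SPrf ((BForm.know i (BForm.know i φ).neg).imp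
        (BForm.bel i (BForm.know i φ).neg)) := SPrf.axKB
    exact SPrf.imp_trans (SPrf.imp_trans h1 h2) (SPrf.contrapose h3)
  · -- ¬K¬Kφ → B φ
    have h4 : SPrf ((BForm.bel i φ).neg.imp (BForm.know i (BForm.bel i φ).neg)) :=
      SPrf.axNI
    have h5 : SPrf ((BForm.know i φ).imp (BForm.bel i φ)) := SPrf.axKB
    have h7 : SPrf ((BForm.know i (BForm.bel i φ).neg).imp
        (BForm.know i (BForm.know i φ).neg)) := SPrf.mono (SPrf.contrapose h5)
    have h8 : SPrf ((BForm.bel i φ).neg.imp (BForm.know i (BForm.know i φ).neg)) :=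
      SPrf.imp_trans h4 h7
    have h9 := SPrf.contrapose h8
    have t : SPrf ((BForm.bel i φ).neg.neg.imp (BForm.bel i φ)) := by
      apply SPrf.taut; intro g h
      simp only [beval, BForm.neg]
      cases h (BForm.bel i φ) <;> rfl
    exact SPrf.imp_trans h9 t
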